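/- arXiv:1609.04513 — 4 statements merged into one kernel-verified Lean document; each statement's English description precedes it below -/
import Mathlib

section
/- Napoleon's theorem: Let ABC be a triangle in the complex plane. Erect equilateral triangles outwardly on each side, and let N₁, N₂, N₃ be their centroids. Then the triangle N₁N₂N₃ is equilateral. -/
open Complex

/-- **Napoleon's theorem.** Erect equilateral triangles outwardly on the sides of a
triangle `ABC` in `ℂ` (third vertex of the one on side `PQ` is `P + (Q - P)·e^{-iπ/3}`);
their centroids `N₁, N₂, N₃` form an equilateral triangle, i.e.
`N₁ + ω N₂ + ω² N₃ = 0` or `N₁ + ω² N₂ + ω N₃ = 0` with `ω = e^{2πi/3}`. -/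
theorem napoleon (A B C : ℂ) :
    let rot : ℂ := Complex.exp (-(Real.pi : ℂ) * Complex.I / 3)
    let ω : ℂ := Complex.exp (2 * (Real.pi : ℂ) * Complex.I / 3)
    let N₁ : ℂ := (A + B + (A + (B - A) * rot)) / 3
    let N₂ : ℂ := (B + C + (B + (C - B) * rot)) / 3
    let N₃ : ℂ := (C + A + (C + (A - C) * rot)) / 3
    N₁ + ω * N₂ + ω ^ 2 * N₃ = 0 ∨ N₁ + ω ^ 2 * N₂ + ω * N₃ = 0 := by
  intro rot ω N₁ N₂ N₃
  have hpi : (Real.pi : ℂ) ≠ 0 := by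
    exact_mod_cast Real.pi_ne_zero
  have h1 : rot = -ω := by
    show Complex.exp (-(Real.pi : ℂ) * Complex.I / 3) = -Complex.exp (2 * (Real.pi : ℂ) * Complex.I / 3)
    rw [show (-(Real.pi : ℂ) * Complex.I / 3) =
        2 * (Real.pi : ℂ) * Complex.I / 3 + (Real.pi : ℂ) * Complex.I + -(2 * (Real.pi : ℂ) * Complex.I) by ring,
      Complex.exp_add, Complex.exp_add, Complex.exp_pi_mul_I, Complex.exp_neg,
      Complex.exp_two_pi_mul_I]
    ring
  have h2 : ω ^ 3 = 1 := by
    show Complex.exp (2 * (Real.pi : ℂ) * Complex.I / 3) ^ 3 = 1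
    rw [pow_succ, pow_succ, pow_one, ← Complex.exp_add, ← Complex.exp_add,
      show 2 * (Real.pi : ℂ) * Complex.I / 3 + 2 * (Real.pi : ℂ) * Complex.I / 3
        + 2 * (Real.pi : ℂ) * Complex.I / 3 = 2 * (Real.pi : ℂ) * Complex.I by ring,
      Complex.exp_two_pi_mul_I]
  have hne : ω ≠ 1 := by
    show Complex.exp (2 * (Real.pi : ℂ) * Complex.I / 3) ≠ 1
    intro h
    rw [Complex.exp_eq_one_iff] at h
    obtain ⟨n, hn⟩ := h
    have hcancel : (1 : ℂ) = 3 * (n : ℂ) := by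
      have h := mul_right_cancel₀ (mul_ne_zero hpi Complex.I_ne_zero)
        (show (1 : ℂ) * ((Real.pi : ℂ) * Complex.I) = (3 * (n : ℂ)) * ((Real.pi : ℂ) * Complex.I) by
          linear_combination (3 / 2 : ℂ) * hn)
      exact h
    have : (1 : ℤ) = 3 * n := by exact_mod_cast hcancel
    omega
  have h3 : ω ^ 2 + ω + 1 = 0 := by
    have : (ω - 1) * (ω ^ 2 + ω + 1) = 0 := by linear_combination h2
    rcases mul_eq_zero.mp this with h | h
    · exact absurd (sub_eq_zero.mp h) hne
    · exact h
  left
  show (A + B + (A + (B - A) * rot)) / 3 + ω * ((B + C + (B + (C - B) * rot)) / 3)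
      + ω ^ 2 * ((C + A + (C + (A - C) * rot)) / 3) = 0
  rw [h1]
  linear_combination ((C - A) / 3) * h2 + ((A + B + C) / 3) * h3
end

section
/- Main Theorem (pointwise version): Let A, B, C, D be the four points of ℝP² with homogeneous coordinates A=(0,0,1), B=(1,0,1), C=(1,1,1), D=(0,1,1), let φ=(1+√5)/2, and let P = AC∩BD, Q = AB∩CD, H = BC∩PQ. Define H_φ as the point on line PQ whose parameter is φ in the parametrization of PQ sending P, H, Q to 0, 1, ∞; concretely, choose representatives p, q of P, Q such that p + q is a representative of H, and set H_φ = p + φ q. Then the five points A, B, H_φ, C, D (in this cyclic order) form a projectively regular pentagon, i.e., there is a projective transformation carrying them in order to the vertices of the standard regular pentagon (cos(2πk/5), sin(2πk/5), 1), k=0,...,4, up to a projective symmetry of the regular pentagon. -/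
open Matrix

noncomputable section

/-- Points of `ℝP²` are represented by nonzero vectors in `ℝ³`;
two vectors represent the same projective point iff they are proportional. -/
def ProjEq (u v : Fin 3 → ℝ) : Prop := ∃ t : ℝ, t ≠ 0 ∧ v = t • u

/-- Cross product in `ℝ³`: the line through two points, or intersection of two lines. -/
def cp (u v : Fin 3 → ℝ) : Fin 3 → ℝ := crossProduct u v

/-- Four points in general position: every three of the representing vectors
are linearly independent (no three of the points are collinear). -/
def GenPos4 (A B C D : Fin 3 → ℝ) : Prop :=
  LinearIndependent ℝ ![A, B, C] ∧ LinearIndependent ℝ ![A, B, D] ∧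
  LinearIndependent ℝ ![A, C, D] ∧ LinearIndependent ℝ ![B, C, D]

/-- P = AC ∩ BD. -/
def Pof (A B C D : Fin 3 → ℝ) : Fin 3 → ℝ := cp (cp A C) (cp B D)

/-- Q = AB ∩ CD. -/
def Qof (A B C D : Fin 3 → ℝ) : Fin 3 → ℝ := cp (cp A B) (cp C D)

/-- H = BC ∩ PQ. -/
def Hof (A B C D : Fin 3 → ℝ) : Fin 3 → ℝ :=
  cp (cp B C) (cp (Pof A B C D) (Qof A B C D))

/-- `IsH lam A B C D v` says that `v` is a representative of the point `H_lam(A,B,C,D)`: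
there are representatives `p` of `P` and `q` of `Q` with `p + q` a representative of `H`,
and `v = p + lam • q`. -/
def IsH (lam : ℝ) (A B C D v : Fin 3 → ℝ) : Prop :=
  ∃ p q : Fin 3 → ℝ, ProjEq (Pof A B C D) p ∧ ProjEq (Qof A B C D) q ∧
    ProjEq (Hof A B C D) (p + q) ∧ v = p + lam • q

/-- Homogeneous coordinates of the vertices of the standard regular pentagon. -/
def pentV (k : Fin 5) : Fin 3 → ℝ :=
  ![Real.cos (2 * Real.pi * (k : ℕ) / 5), Real.sin (2 * Real.pi * (k : ℕ) / 5), 1]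

/-- The explicit projective transformation, with `s = sin (π/5)`. -/
def Mmat (s : ℝ) : Matrix (Fin 3) (Fin 3) ℝ :=
  ![![-(1 + Real.sqrt 5)/4, (Real.sqrt 5 - 5)/4, 1],
    ![s, -((1 + Real.sqrt 5)/2) * s, 0],
    ![(Real.sqrt 5 - 3)/2, 0, 1]]

lemma sin_pi5_pos : 0 < Real.sin (Real.pi/5) :=
  Real.sin_pos_of_pos_of_lt_pi (by positivity) (by nlinarith [Real.pi_pos])

lemma sqrt5_sq : Real.sqrt 5 ^ 2 = 5 := Real.sq_sqrt (by norm_num)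

lemma pentVec3_eq {a b c d e f : ℝ} (h1 : a = d) (h2 : b = e) (h3 : c = f) :
    ![a, b, c] = ![d, e, f] := by rw [h1, h2, h3]

lemma pentSmul_vec3 (t a b c : ℝ) : t • ![a, b, c] = ![t * a, t * b, t * c] := by
  funext i; fin_cases i <;> simp

lemma Mmat_det_ne_zero : (Mmat (Real.sin (Real.pi/5))).det ≠ 0 := by
  have hs := sin_pi5_pos
  have h5 := sqrt5_sq
  have h5' : Real.sqrt 5 < 5 := by nlinarith [Real.sqrt_nonneg 5]
  have hd : (Mmat (Real.sin (Real.pi/5))).det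
      = Real.sin (Real.pi/5) * ((5 - Real.sqrt 5)/2) := by
    rw [Matrix.det_fin_three]
    simp only [Mmat, Matrix.det_fin_three, Matrix.cons_val_zero, Matrix.cons_val_one,
      Matrix.head_cons, Matrix.cons_val_two, Matrix.tail_cons, Matrix.head_fin_const]
    linear_combination (Real.sin (Real.pi/5) * (3/8)) * h5
  rw [hd]
  have : 0 < Real.sin (Real.pi/5) * ((5 - Real.sqrt 5)/2) :=
    mul_pos hs (by linarith)
  exact this.ne'

lemma pent0 : pentV 0 = ![1, 0, 1] := by
  show ![Real.cos (2 * Real.pi * (((0:Fin 5) : ℕ) : ℝ) / 5),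
        Real.sin (2 * Real.pi * (((0:Fin 5) : ℕ) : ℝ) / 5), 1] = _
  have ha : (2 * Real.pi * (((0:Fin 5) : ℕ) : ℝ) / 5 : ℝ) = 0 := by
    have : ((0:Fin 5) : ℕ) = 0 := rfl
    rw [this]; push_cast; ring
  exact pentVec3_eq (by rw [ha, Real.cos_zero]) (by rw [ha, Real.sin_zero]) rfl

lemma pent1 : pentV 1 =
    ![(Real.sqrt 5 - 1)/4, ((1 + Real.sqrt 5)/2) * Real.sin (Real.pi/5), 1] := by
  show ![Real.cos (2 * Real.pi * (((1:Fin 5) : ℕ) : ℝ) / 5),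
        Real.sin (2 * Real.pi * (((1:Fin 5) : ℕ) : ℝ) / 5), 1] = _
  have ha : (2 * Real.pi * (((1:Fin 5) : ℕ) : ℝ) / 5 : ℝ) = 2 * (Real.pi/5) := by
    have : ((1:Fin 5) : ℕ) = 1 := rfl
    rw [this]; push_cast; ring
  refine pentVec3_eq ?_ ?_ rfl
  · rw [ha, Real.cos_two_mul, Real.cos_pi_div_five]
    linear_combination sqrt5_sq / 8
  · rw [ha, Real.sin_two_mul, Real.cos_pi_div_five]
    ring

lemma pent2 : pentV 2 = ![-((1 + Real.sqrt 5)/4), Real.sin (Real.pi/5), 1] := by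
  show ![Real.cos (2 * Real.pi * (((2:Fin 5) : ℕ) : ℝ) / 5),
        Real.sin (2 * Real.pi * (((2:Fin 5) : ℕ) : ℝ) / 5), 1] = _
  have ha : (2 * Real.pi * (((2:Fin 5) : ℕ) : ℝ) / 5 : ℝ) = Real.pi - Real.pi/5 := by
    have : ((2:Fin 5) : ℕ) = 2 := rfl
    rw [this]; push_cast; ring
  refine pentVec3_eq ?_ ?_ rfl
  · rw [ha, Real.cos_pi_sub, Real.cos_pi_div_five]
  · rw [ha, Real.sin_pi_sub]

lemma pent3 : pentV 3 = ![-((1 + Real.sqrt 5)/4), -Real.sin (Real.pi/5), 1] := by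
  show ![Real.cos (2 * Real.pi * (((3:Fin 5) : ℕ) : ℝ) / 5),
        Real.sin (2 * Real.pi * (((3:Fin 5) : ℕ) : ℝ) / 5), 1] = _
  have ha : (2 * Real.pi * (((3:Fin 5) : ℕ) : ℝ) / 5 : ℝ) = Real.pi + Real.pi/5 := by
    have : ((3:Fin 5) : ℕ) = 3 := rfl
    rw [this]; push_cast; ring
  refine pentVec3_eq ?_ ?_ rfl
  · rw [ha, Real.cos_add, Real.cos_pi, Real.sin_pi, Real.cos_pi_div_five]
    ring
  · rw [ha, Real.sin_add, Real.cos_pi, Real.sin_pi]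
    ring

lemma pent4 : pentV 4 =
    ![(Real.sqrt 5 - 1)/4, -(((1 + Real.sqrt 5)/2) * Real.sin (Real.pi/5)), 1] := by
  show ![Real.cos (2 * Real.pi * (((4:Fin 5) : ℕ) : ℝ) / 5),
        Real.sin (2 * Real.pi * (((4:Fin 5) : ℕ) : ℝ) / 5), 1] = _
  have ha : (2 * Real.pi * (((4:Fin 5) : ℕ) : ℝ) / 5 : ℝ) = 2 * (Real.pi - Real.pi/5) := by
    have : ((4:Fin 5) : ℕ) = 4 := rfl
    rw [this]; push_cast; ring
  refine pentVec3_eq ?_ ?_ rfl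
  · rw [ha, Real.cos_two_mul, Real.cos_pi_sub, Real.cos_pi_div_five]
    linear_combination sqrt5_sq / 8
  · rw [ha, Real.sin_two_mul, Real.sin_pi_sub, Real.cos_pi_sub, Real.cos_pi_div_five]
    ring

set_option maxHeartbeats 1000000 in
/-- **Main Theorem, pointwise version.** For the quadrilateral with homogeneous
coordinates `A=(0,0,1)`, `B=(1,0,1)`, `C=(1,1,1)`, `D=(0,1,1)` and `φ = (1+√5)/2`, the
five points `A, B, H_φ(A,B,C,D), C, D` (in this cyclic order) form a projectively
regular pentagon. -/
theorem main_theorem_pointwise :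
    let A : Fin 3 → ℝ := ![0, 0, 1]
    let B : Fin 3 → ℝ := ![1, 0, 1]
    let C : Fin 3 → ℝ := ![1, 1, 1]
    let D : Fin 3 → ℝ := ![0, 1, 1]
    let φ : ℝ := (1 + Real.sqrt 5) / 2
    ∀ v : Fin 3 → ℝ, IsH φ A B C D v →
      ∃ g : GL (Fin 3) ℝ, ∀ k : Fin 5,
        ProjEq ((g : Matrix (Fin 3) (Fin 3) ℝ).mulVec (![A, B, v, C, D] k)) (pentV k) := by
  intro A B C D φ v hv
  obtain ⟨p, q, ⟨t1, ht1, hp⟩, ⟨t2, ht2, hq⟩, ⟨t3, ht3, hpq⟩, hvpq⟩ := hv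
  have hP : Pof A B C D = ![1,1,2] := by
    show Pof ![0,0,1] ![1,0,1] ![1,1,1] ![0,1,1] = _
    funext i; fin_cases i <;> simp [Pof, cp, cross_apply] <;> norm_num
  have hQ : Qof A B C D = ![1,0,0] := by
    show Qof ![0,0,1] ![1,0,1] ![1,1,1] ![0,1,1] = _
    funext i; fin_cases i <;> simp [Qof, cp, cross_apply] <;> norm_num
  have hH : Hof A B C D = ![-2,-1,-2] := by
    show Hof ![0,0,1] ![1,0,1] ![1,1,1] ![0,1,1] = _
    funext i; fin_cases i <;> simp [Hof, Pof, Qof, cp, cross_apply] <;> norm_num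
  rw [hP] at hp; rw [hQ] at hq; rw [hH] at hpq
  have e1 : t1 = -t3 := by
    have := congrFun hpq 1
    simp [hp, hq] at this
    linarith
  have e0 : t1 + t2 = -2 * t3 := by
    have := congrFun hpq 0
    simp [hp, hq] at this
    linarith
  have ht1' : t1 ≠ 0 := by rw [e1]; simpa using ht3
  have ht2' : t2 = t1 := by linarith
  have hw : v = t1 • ![1 + φ, 1, 2] := by
    funext i; rw [hvpq, hp, hq, ht2']
    fin_cases i <;> simp [φ] <;> ring
  set s : ℝ := Real.sin (Real.pi/5) with hsdef
  have h5 : Real.sqrt 5 ^ 2 = 5 := sqrt5_sq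
  refine ⟨Matrix.GeneralLinearGroup.mkOfDetNeZero (Mmat s) Mmat_det_ne_zero, ?_⟩
  have hcoe : ((Matrix.GeneralLinearGroup.mkOfDetNeZero (Mmat s) Mmat_det_ne_zero :
      GL (Fin 3) ℝ) : Matrix (Fin 3) (Fin 3) ℝ) = Mmat s := rfl
  have hMA : Mmat s *ᵥ ![0,0,1] = ![1, 0, 1] := by
    funext i; fin_cases i <;>
      simp [Mmat, Matrix.mulVec, dotProduct, Fin.sum_univ_three]
  have hMB : Mmat s *ᵥ ![1,0,1] = ![(3 - Real.sqrt 5)/4, s, (Real.sqrt 5 - 1)/2] := by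
    funext i; fin_cases i <;>
      simp [Mmat, Matrix.mulVec, dotProduct, Fin.sum_univ_three] <;> ring
  have hMv : Mmat s *ᵥ ![1 + φ, 1, 2] = ![-((1 + Real.sqrt 5)/4), s, 1] := by
    funext i; fin_cases i
    · simp [Mmat, Matrix.mulVec, dotProduct, Fin.sum_univ_three, φ]
      linear_combination (-1/8 : ℝ) * h5
    · simp [Mmat, Matrix.mulVec, dotProduct, Fin.sum_univ_three, φ]
      ring
    · simp [Mmat, Matrix.mulVec, dotProduct, Fin.sum_univ_three, φ]
      linear_combination (1/4 : ℝ) * h5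
  have hMC : Mmat s *ᵥ ![1,1,1]
      = ![-(1:ℝ)/2, s * (1 - (1 + Real.sqrt 5)/2), (Real.sqrt 5 - 1)/2] := by
    funext i; fin_cases i <;>
      simp [Mmat, Matrix.mulVec, dotProduct, Fin.sum_univ_three] <;> ring
  have hMD : Mmat s *ᵥ ![0,1,1] = ![(Real.sqrt 5 - 1)/4, -((1 + Real.sqrt 5)/2) * s, 1] := by
    funext i; fin_cases i <;>
      simp [Mmat, Matrix.mulVec, dotProduct, Fin.sum_univ_three] <;> ring
  rw [hcoe]
  intro k
  fin_cases k
  · -- k = 0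
    show ProjEq (Mmat s *ᵥ ![0,0,1]) (pentV 0)
    exact ⟨1, one_ne_zero, by rw [hMA, pent0, one_smul]⟩
  · -- k = 1
    show ProjEq (Mmat s *ᵥ ![1,0,1]) (pentV 1)
    refine ⟨(1 + Real.sqrt 5)/2, by positivity, ?_⟩
    rw [hMB, pent1, pentSmul_vec3]
    exact pentVec3_eq (by linear_combination h5/8) rfl (by linear_combination (-1/4 : ℝ) * h5)
  · -- k = 2
    show ProjEq (Mmat s *ᵥ v) (pentV 2)
    refine ⟨1/t1, by simpa using ht1', ?_⟩
    rw [hw, Matrix.mulVec_smul, hMv, pent2, smul_smul]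
    rw [show (1/t1) * t1 = 1 by field_simp, one_smul]
  · -- k = 3
    show ProjEq (Mmat s *ᵥ ![1,1,1]) (pentV 3)
    refine ⟨(1 + Real.sqrt 5)/2, by positivity, ?_⟩
    rw [hMC, pent3, pentSmul_vec3]
    exact pentVec3_eq (by ring) (by linear_combination (s/4) * h5)
      (by linear_combination (-1/4 : ℝ) * h5)
  · -- k = 4
    show ProjEq (Mmat s *ᵥ ![0,1,1]) (pentV 4)
    refine ⟨1, one_ne_zero, ?_⟩
    rw [hMD, pent4, one_smul]
    exact pentVec3_eq rfl (by ring) rfl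
end
end

section
/- Projective invariance of the construction H_λ: for any g ∈ PGL(3,ℝ), any four points A,B,C,D of ℝP² in general position, and any λ ∈ ℝ, one has H_λ(gA, gB, gC, gD) = g·H_λ(A,B,C,D). -/
open Matrix

noncomputable section

/-! The cross product is covariant: `m u ⨯₃ m v = (adj m)ᵀ (u ⨯₃ v)`, and `adj (adj m) = det m • m`
in dimension 3, so the vectors `P`, `Q`, `H` built from `mA, mB, mC, mD` are `det m • mP`,
`det m • mQ` and `(det m)³ • mH`; hence `m` maps representatives of `H_λ(A,B,C,D)` to
representatives of `H_λ(mA,mB,mC,mD)`, and general position is preserved.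
Well-definedness only needs `P` and `Q` to be independent: writing `p = aP`, `q = bQ`, the condition
`p + q ∥ H` fixes `(a, b)` up to a common factor, hence `p + λq` up to scale. In general position
`P ∈ AC` and `Q ∈ AB` have nonzero `C`- and `B`-coordinates in the basis `A, B, C`, so they are
independent. -/

section CrossProduct

variable {R : Type*} [CommRing R]

theorem cross_mulVec (m : Matrix (Fin 3) (Fin 3) R) (u v : Fin 3 → R) :
    (m *ᵥ u) ⨯₃ (m *ᵥ v) = (adjugate m)ᵀ *ᵥ (u ⨯₃ v) := by
  ext i
  fin_cases i <;>
    simp only [Fin.zero_eta, Fin.mk_one, Fin.reduceFinMk, Fin.isValue, cross_apply, mulVec,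
      dotProduct, Fin.sum_univ_three, adjugate_fin_three, transpose_apply, of_apply, cons_val',
      cons_val_fin_one, cons_val_zero, cons_val_one, cons_val] <;> ring

theorem dot_cross_mulVec (m : Matrix (Fin 3) (Fin 3) R) (u v w : Fin 3 → R) :
    (m *ᵥ u) ⬝ᵥ (m *ᵥ v) ⨯₃ (m *ᵥ w) = m.det * (u ⬝ᵥ v ⨯₃ w) := by
  rw [cross_mulVec, dotProduct_mulVec, vecMul_transpose, mulVec_mulVec, adjugate_mul,
    smul_mulVec, one_mulVec, smul_dotProduct, smul_eq_mul]

theorem cross_cross_mulVec (m : Matrix (Fin 3) (Fin 3) R) (u v w x : Fin 3 → R) :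
    ((m *ᵥ u) ⨯₃ (m *ᵥ v)) ⨯₃ ((m *ᵥ w) ⨯₃ (m *ᵥ x)) = m.det • m *ᵥ ((u ⨯₃ v) ⨯₃ (w ⨯₃ x)) := by
  rw [cross_mulVec, cross_mulVec, cross_mulVec, adjugate_transpose, transpose_transpose,
    adjugate_adjugate' m, Fintype.card_fin, pow_one, smul_mulVec]

end CrossProduct

theorem linearIndependent_iff_dot_cross_ne_zero {K : Type*} [Field K] (u v w : Fin 3 → K) :
    LinearIndependent K ![u, v, w] ↔ u ⬝ᵥ v ⨯₃ w ≠ 0 := by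
  rw [triple_product_eq_det, ← isUnit_iff_ne_zero]
  exact (linearIndependent_rows_iff_isUnit (A := of ![u, v, w])).trans
    (isUnit_iff_isUnit_det _)

theorem LinearIndependent.smul_add_smul_eq_smul {K V : Type*} [Field K] [AddCommGroup V]
    [Module K V] {x y z : V} (hxy : LinearIndependent K ![x, y]) (c : K)
    {a₁ b₁ e₁ a₂ b₂ e₂ : K} (h₁ : a₁ • x + b₁ • y = e₁ • z) (h₂ : a₂ • x + b₂ • y = e₂ • z) :
    e₁ • (a₂ • x + c • b₂ • y) = e₂ • (a₁ • x + c • b₁ • y) := by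
  obtain ⟨ha, hb⟩ := LinearIndependent.pair_iff.1 hxy (e₁ * a₂ - e₂ * a₁) (e₁ * b₂ - e₂ * b₁)
    (by linear_combination (norm := module) e₁ • h₂ - e₂ • h₁)
  linear_combination (norm := module) ha • x + (c * hb) • y

theorem GenPos4.mulVec {A B C D : Fin 3 → ℝ} (h : GenPos4 A B C D)
    {m : Matrix (Fin 3) (Fin 3) ℝ} (hm : m.det ≠ 0) :
    GenPos4 (m *ᵥ A) (m *ᵥ B) (m *ᵥ C) (m *ᵥ D) := by
  simp only [GenPos4, linearIndependent_iff_dot_cross_ne_zero, dot_cross_mulVec] at h ⊢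
  obtain ⟨hABC, hABD, hACD, hBCD⟩ := h
  exact ⟨mul_ne_zero hm hABC, mul_ne_zero hm hABD, mul_ne_zero hm hACD, mul_ne_zero hm hBCD⟩

theorem GenPos4.linearIndependent_Pof_Qof {A B C D : Fin 3 → ℝ} (h : GenPos4 A B C D) :
    LinearIndependent ℝ ![Pof A B C D, Qof A B C D] := by
  obtain ⟨hABC, hABD, hACD, -⟩ := h
  rw [linearIndependent_iff_dot_cross_ne_zero] at hABC hABD hACD
  have hP : Pof A B C D = (A ⬝ᵥ B ⨯₃ D) • C - (C ⬝ᵥ B ⨯₃ D) • A :=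
    cross_cross_eq_smul_sub_smul A C (B ⨯₃ D)
  have hQ : Qof A B C D = (A ⬝ᵥ C ⨯₃ D) • B - (B ⬝ᵥ C ⨯₃ D) • A :=
    cross_cross_eq_smul_sub_smul A B (C ⨯₃ D)
  refine LinearIndependent.pair_iff.2 fun s t hst => ⟨?_, ?_⟩
  -- pairing with `A ⨯₃ B`, resp. `C ⨯₃ A`, isolates the `C`-coordinate of `P`, resp. the
  -- `B`-coordinate of `Q`
  · have := congrArg (· ⬝ᵥ A ⨯₃ B) hst
    simp only [hP, hQ, add_dotProduct, sub_dotProduct, smul_dotProduct, dot_self_cross,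
      dot_cross_self, triple_product_permutation C A B, zero_dotProduct] at this
    simpa [hABC, hABD] using this
  · have := congrArg (· ⬝ᵥ C ⨯₃ A) hst
    simp only [hP, hQ, add_dotProduct, sub_dotProduct, smul_dotProduct, dot_self_cross,
      dot_cross_self, triple_product_permutation B C A,
      triple_product_permutation C A B, zero_dotProduct] at this
    simpa [hABC, hACD] using this

section Covariance

variable (m : Matrix (Fin 3) (Fin 3) ℝ) (A B C D : Fin 3 → ℝ)

theorem Pof_mulVec :
    Pof (m *ᵥ A) (m *ᵥ B) (m *ᵥ C) (m *ᵥ D) = m.det • m *ᵥ Pof A B C D :=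
  cross_cross_mulVec m A C B D

theorem Qof_mulVec :
    Qof (m *ᵥ A) (m *ᵥ B) (m *ᵥ C) (m *ᵥ D) = m.det • m *ᵥ Qof A B C D :=
  cross_cross_mulVec m A B C D

theorem Hof_mulVec :
    Hof (m *ᵥ A) (m *ᵥ B) (m *ᵥ C) (m *ᵥ D) = m.det ^ 3 • m *ᵥ Hof A B C D := by
  rw [Hof, Hof, Pof_mulVec, Qof_mulVec]
  simp only [cp, map_smul, LinearMap.smul_apply, cross_cross_mulVec, smul_smul]
  ring_nf

end Covariance

theorem ProjEq.smul_mulVec {u v : Fin 3 → ℝ} (h : ProjEq u v) {c : ℝ} (hc : c ≠ 0)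
    (m : Matrix (Fin 3) (Fin 3) ℝ) : ProjEq (c • m *ᵥ u) (m *ᵥ v) := by
  obtain ⟨t, ht, rfl⟩ := h
  refine ⟨c⁻¹ * t, mul_ne_zero (inv_ne_zero hc) ht, ?_⟩
  rw [mulVec_smul, mul_smul, smul_comm t c, inv_smul_smul₀ hc]

theorem IsH.mulVec {lam : ℝ} {A B C D v : Fin 3 → ℝ} (hv : IsH lam A B C D v)
    {m : Matrix (Fin 3) (Fin 3) ℝ} (hm : m.det ≠ 0) :
    IsH lam (m *ᵥ A) (m *ᵥ B) (m *ᵥ C) (m *ᵥ D) (m *ᵥ v) := by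
  obtain ⟨p, q, hp, hq, hpq, rfl⟩ := hv
  refine ⟨m *ᵥ p, m *ᵥ q, ?_, ?_, ?_, by rw [mulVec_add, mulVec_smul]⟩
  · rw [Pof_mulVec]
    exact hp.smul_mulVec hm m
  · rw [Qof_mulVec]
    exact hq.smul_mulVec hm m
  · rw [Hof_mulVec, ← mulVec_add]
    exact hpq.smul_mulVec (pow_ne_zero 3 hm) m

theorem IsH.projEq {lam : ℝ} {A B C D v w : Fin 3 → ℝ} (hv : IsH lam A B C D v)
    (hw : IsH lam A B C D w) (hPQ : LinearIndependent ℝ ![Pof A B C D, Qof A B C D]) :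
    ProjEq v w := by
  obtain ⟨-, -, ⟨a₁, -, rfl⟩, ⟨b₁, -, rfl⟩, ⟨e₁, he₁, h₁⟩, rfl⟩ := hv
  obtain ⟨-, -, ⟨a₂, -, rfl⟩, ⟨b₂, -, rfl⟩, ⟨e₂, he₂, h₂⟩, rfl⟩ := hw
  refine ⟨e₁⁻¹ * e₂, mul_ne_zero (inv_ne_zero he₁) he₂, ?_⟩
  rw [mul_smul, ← hPQ.smul_add_smul_eq_smul lam h₁ h₂, inv_smul_smul₀ he₁]

/-- **Projective invariance of `H_λ`.** For any `g ∈ PGL(3,ℝ)`, any four points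
`A,B,C,D` of `ℝP²` in general position and any `λ ∈ ℝ`, one has
`H_λ(gA, gB, gC, gD) = g · H_λ(A,B,C,D)` as points of `ℝP²`. -/
theorem H_projectively_invariant (g : GL (Fin 3) ℝ) (lam : ℝ) (A B C D : Fin 3 → ℝ)
    (h : GenPos4 A B C D) :
    let m := (g : Matrix (Fin 3) (Fin 3) ℝ)
    ∀ v w : Fin 3 → ℝ, IsH lam A B C D v →
      IsH lam (m.mulVec A) (m.mulVec B) (m.mulVec C) (m.mulVec D) w →
      ProjEq (m.mulVec v) w := by
  intro m v w hv hw
  have hm : m.det ≠ 0 := ((isUnit_iff_isUnit_det m).1 g.isUnit).ne_zero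
  exact (hv.mulVec hm).projEq hw (h.mulVec hm).linearIndependent_Pof_Qof
end
end

section
/- Well-definedness of H_λ: given four points A,B,C,D of ℝP² in general position, let P = (A×C)×(B×D), Q = (A×B)×(C×D), H = (B×C)×((P×Q)); then there exist representatives p of P and q of Q with p + q a representative of H, and the projective point [p + λq] is independent of the choice of such representatives, for every λ ∈ ℝ. -/
open Matrix

noncomputable section

def d3 (u v w : Fin 3 → ℝ) : ℝ := Matrix.det (Matrix.of ![u, v, w])

lemma d3_expand (u v w : Fin 3 → ℝ) : d3 u v w =
    u 0 * v 1 * w 2 - u 0 * v 2 * w 1 - u 1 * v 0 * w 2 + u 1 * v 2 * w 0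
      + u 2 * v 0 * w 1 - u 2 * v 1 * w 0 := by
  simp [d3, Matrix.det_fin_three]

lemma cp_apply (u v : Fin 3 → ℝ) (i : Fin 3) : cp u v i =
    ![u 1 * v 2 - u 2 * v 1, u 2 * v 0 - u 0 * v 2, u 0 * v 1 - u 1 * v 0] i := by
  fin_cases i <;> simp [cp, crossProduct]

/-- (a×b)×(c×d) = det(a,b,d) • c − det(a,b,c) • d -/
lemma cpcp (a b c d : Fin 3 → ℝ) :
    cp (cp a b) (cp c d) = d3 a b d • c - d3 a b c • d := by
  ext i
  fin_cases i <;>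
    simp [cp_apply, d3_expand, Pi.sub_apply, Pi.smul_apply, smul_eq_mul] <;> ring

lemma d3_ne_of_li {u v w : Fin 3 → ℝ} (h : LinearIndependent ℝ ![u, v, w]) :
    d3 u v w ≠ 0 := by
  have h' : LinearIndependent ℝ (fun i => (Matrix.of ![u, v, w]) i) := h
  have := Matrix.linearIndependent_rows_iff_isUnit.mp h'
  have := (Matrix.isUnit_iff_isUnit_det _).mp this
  exact this.ne_zero

lemma Pof_eq (A B C D : Fin 3 → ℝ) :
    Pof A B C D = d3 A C D • B + d3 A B C • D := by
  rw [Pof, cpcp]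
  ext i
  simp [d3_expand, Pi.add_apply, Pi.sub_apply, Pi.smul_apply, smul_eq_mul]
  ring

lemma Qof_eq (A B C D : Fin 3 → ℝ) :
    Qof A B C D = d3 A B D • C - d3 A B C • D := by
  rw [Qof, cpcp]

lemma lin_comb_eq_zero {B C D : Fin 3 → ℝ} (h : LinearIndependent ℝ ![B, C, D])
    {x y z : ℝ} (hx : x • B + y • C + z • D = 0) : x = 0 ∧ y = 0 ∧ z = 0 := by
  rw [Fintype.linearIndependent_iff] at h
  have := h ![x, y, z] ?_
  · exact ⟨this 0, this 1, this 2⟩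
  · simpa [Fin.sum_univ_three, add_assoc] using hx

/-- **Well-definedness of `H_λ`.** For `A,B,C,D` in general position there exist
representatives `p` of `P` and `q` of `Q` with `p + q` a representative of `H`, and the
projective point `[p + λ q]` does not depend on the choice of such representatives. -/
theorem H_well_defined (A B C D : Fin 3 → ℝ) (h : GenPos4 A B C D) :
    (∃ p q : Fin 3 → ℝ, ProjEq (Pof A B C D) p ∧ ProjEq (Qof A B C D) q ∧
      ProjEq (Hof A B C D) (p + q)) ∧
    ∀ (lam : ℝ) (p q p' q' : Fin 3 → ℝ),
      (ProjEq (Pof A B C D) p ∧ ProjEq (Qof A B C D) q ∧ ProjEq (Hof A B C D) (p + q)) →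
      (ProjEq (Pof A B C D) p' ∧ ProjEq (Qof A B C D) q' ∧ ProjEq (Hof A B C D) (p' + q')) →
      ProjEq (p + lam • q) (p' + lam • q') := by

  obtain ⟨hABC, hABD, hACD, hBCD⟩ := h
  have dABC := d3_ne_of_li hABC
  have dABD := d3_ne_of_li hABD
  have dACD := d3_ne_of_li hACD
  have dBCD := d3_ne_of_li hBCD
  set P := Pof A B C D with hP
  set Q := Qof A B C D with hQ
  -- H = -(dABC * dBCD) • (P + Q)
  have hH : Hof A B C D = (-(d3 A B C * d3 B C D)) • (P + Q) := by
    rw [Hof, ← hP, ← hQ, cpcp]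
    have e1 : d3 B C Q = -(d3 A B C * d3 B C D) := by
      rw [hQ, Qof_eq]; simp [d3_expand, Pi.sub_apply, Pi.smul_apply, smul_eq_mul]; ring
    have e2 : d3 B C P = d3 A B C * d3 B C D := by
      rw [hP, Pof_eq]; simp [d3_expand, Pi.add_apply, Pi.smul_apply, smul_eq_mul]; ring
    rw [e1, e2]
    ext i
    simp [Pi.add_apply, Pi.sub_apply, Pi.smul_apply, smul_eq_mul]
    ring
  have ht : -(d3 A B C * d3 B C D) ≠ 0 := by
    simp [dABC, dBCD]
  -- key: if p,q are suitable reps, then p = c•P, q = c•Q for common c ≠ 0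
  have key : ∀ p q : Fin 3 → ℝ,
      (ProjEq P p ∧ ProjEq Q q ∧ ProjEq (Hof A B C D) (p + q)) →
      ∃ c : ℝ, c ≠ 0 ∧ p = c • P ∧ q = c • Q := by
    rintro p q ⟨⟨a, ha, hpa⟩, ⟨b, hb, hqb⟩, ⟨c, hc, hpq⟩⟩
    rw [hH] at hpq
    -- a•P + b•Q = c • (-(...)) • (P+Q)
    set s := c * (-(d3 A B C * d3 B C D)) with hs
    have hs0 : s ≠ 0 := mul_ne_zero hc ht
    have hcomb : (a - s) • P + (b - s) • Q = 0 := by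
      have : a • P + b • Q = s • P + s • Q := by
        rw [← hpa, ← hqb, hpq, smul_smul, smul_add]
      rw [sub_smul, sub_smul]
      rw [show (a•P - s•P) + (b•Q - s•Q) = (a•P + b•Q) - (s•P + s•Q) by abel, this, sub_self]
    -- expand in B, C, D
    have hexp : ((a - s) * d3 A C D) • B + ((b - s) * d3 A B D) • C
        + (((a - s) - (b - s)) * d3 A B C) • D = 0 := by
      rw [hP, Pof_eq, hQ, Qof_eq] at hcomb
      have := hcomb
      rw [smul_add, smul_sub] at this
      rw [show ((a - s) * d3 A C D) • B + ((b - s) * d3 A B D) • C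
          + (((a - s) - (b - s)) * d3 A B C) • D
        = ((a-s) • (d3 A C D • B) + (a-s) • (d3 A B C • D))
          + ((b-s) • (d3 A B D • C) - (b-s) • (d3 A B C • D)) by
          simp only [smul_smul]; module]
      exact this
    obtain ⟨h1, h2, _⟩ := lin_comb_eq_zero hBCD hexp
    have ha' : a = s := by
      have := mul_eq_zero.mp h1
      rcases this with h | h
      · linarith [sub_eq_zero.mp (by linarith : a - s = 0)]
      · exact absurd h dACD
    have hb' : b = s := by
      rcases mul_eq_zero.mp h2 with h | h
      · linarith
      · exact absurd h dABD
    exact ⟨s, hs0, by rw [hpa, ha'], by rw [hqb, hb']⟩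
  constructor
  · exact ⟨P, Q, ⟨1, one_ne_zero, (one_smul _ _).symm⟩, ⟨1, one_ne_zero, (one_smul _ _).symm⟩,
      ⟨(-(d3 A B C * d3 B C D))⁻¹, inv_ne_zero ht, by
        rw [hH, smul_smul, inv_mul_cancel₀ ht, one_smul]⟩⟩
  · rintro lam p q p' q' h1 h2
    obtain ⟨c, hc, hp, hq⟩ := key p q h1
    obtain ⟨c', hc', hp', hq'⟩ := key p' q' h2
    refine ⟨c' / c, div_ne_zero hc' hc, ?_⟩
    rw [hp, hq, hp', hq']
    ext i
    simp [Pi.add_apply, Pi.smul_apply, smul_eq_mul]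
    field_simp
end
end
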